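/- arXiv:1706.08489 — 5 statements merged into one kernel-verified Lean document; each statement's English description precedes it below -/
import Mathlib

section
/- Let n > 0, κ ∈ ℝ and R > 0, and let φ : (0,R] → ℝ be differentiable with −φ'(t) ≥ (1/n)·φ(t)² + κ for all t ∈ (0,R] and lim_{t→0⁺} t²·φ(t) = 0. If κ > 0, assume additionally R < π·√(n/κ). Then: φ(R) ≤ √(n·κ)·cot(√(κ/n)·R) if κ > 0; φ(R) ≤ n/R if κ = 0; and φ(R) ≤ √(n·|κ|)·coth(√(|κ|/n)·R) if κ < 0. -/
/-!
Compare `φ` with the logarithmic derivative of a Jacobi field: if `s'' = -(κ/n) s` and `s 0 = 0`,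
then completing the square in the Riccati inequality shows that the energy
`E = s² φ - n s s'` is nonincreasing on `(0, R]`, while the growth condition `t² φ(t) → 0` forces
`E → 0` at `0⁺`. Hence `E R ≤ 0`, i.e. `φ R ≤ n s'(R) / s(R)` wherever `s(R) > 0`.
Taking `s` to be `sin (√(κ/n) t)`, `t` or `sinh (√(|κ|/n) t)` gives the three bounds; for `κ > 0`
the hypothesis `R < π √(n/κ)` is exactly what keeps `s` positive up to `R`.
-/

open Set Filter Real Topology

lemma riccati_energy_deriv_nonpos {n κ x x' y y' : ℝ} (hn : 0 < n)
    (hRic : -y' ≥ (1 / n) * y ^ 2 + κ) :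
    2 * x * x' * y + x ^ 2 * y' - n * (x' * x' + x * (-(κ / n) * x)) ≤ 0 := by
  have hsq : 2 * x * x' * y + x ^ 2 * y' - n * (x' * x' + x * (-(κ / n) * x))
      = -(x ^ 2 * (-y' - ((1 / n) * y ^ 2 + κ)) + (1 / n) * (x * y - n * x') ^ 2) := by
    field_simp
    ring
  rw [hsq, neg_nonpos]
  exact add_nonneg (mul_nonneg (sq_nonneg _) (by linarith)) (by positivity)

lemma tendsto_sq_mul_nhdsGT_zero {s φ : ℝ → ℝ} {c : ℝ} (hs : HasDerivAt s c 0) (hs0 : s 0 = 0)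
    (hlim : Tendsto (fun t => t ^ 2 * φ t) (𝓝[>] 0) (𝓝 0)) :
    Tendsto (fun t => s t ^ 2 * φ t) (𝓝[>] 0) (𝓝 0) := by
  have hslope : Tendsto (fun t => s t / t) (𝓝[>] 0) (𝓝 c) := by
    refine ((hasDerivAt_iff_tendsto_slope.1 hs).mono_left
      (nhdsWithin_mono _ fun _ hx => ne_of_gt hx)).congr' ?_
    filter_upwards with t
    simp [slope, hs0, div_eq_inv_mul]
  have hprod := (hslope.pow 2).mul hlim
  rw [mul_zero] at hprod
  refine hprod.congr' ?_
  filter_upwards [self_mem_nhdsWithin] with t (ht : 0 < t)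
  field_simp

lemma hasDerivAt_sin_mul (a t : ℝ) : HasDerivAt (fun t => sin (a * t)) (a * cos (a * t)) t := by
  simpa [mul_comm] using ((hasDerivAt_id t).const_mul a).sin

lemma hasDerivAt_mul_cos_mul (a t : ℝ) :
    HasDerivAt (fun t => a * cos (a * t)) (-a ^ 2 * sin (a * t)) t := by
  refine (((hasDerivAt_id t).const_mul a).cos.const_mul a).congr_deriv ?_
  simp only [id_eq]
  ring

lemma hasDerivAt_sinh_mul (a t : ℝ) :
    HasDerivAt (fun t => sinh (a * t)) (a * cosh (a * t)) t := by
  simpa [mul_comm] using ((hasDerivAt_id t).const_mul a).sinh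

lemma hasDerivAt_mul_cosh_mul (a t : ℝ) :
    HasDerivAt (fun t => a * cosh (a * t)) (a ^ 2 * sinh (a * t)) t := by
  refine (((hasDerivAt_id t).const_mul a).cosh.const_mul a).congr_deriv ?_
  simp only [id_eq]
  ring

section Comparison

variable {n κ R : ℝ} {φ φ' s s' : ℝ → ℝ}

theorem riccati_comparison (hn : 0 < n)
    (hφ : ∀ t ∈ Ioc 0 R, HasDerivWithinAt φ (φ' t) (Ioc 0 R) t)
    (hRic : ∀ t ∈ Ioc 0 R, -(φ' t) ≥ (1 / n) * (φ t) ^ 2 + κ)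
    (hlim : Tendsto (fun t => t ^ 2 * φ t) (𝓝[>] 0) (𝓝 0))
    (hs : ∀ t, HasDerivAt s (s' t) t) (hs' : ∀ t, HasDerivAt s' (-(κ / n) * s t) t)
    (hs0 : s 0 = 0) (hR : 0 < R) (hsR : 0 < s R) :
    φ R ≤ n * s' R / s R := by
  set E : ℝ → ℝ := fun t => s t ^ 2 * φ t - n * (s t * s' t)
  have hE : ∀ t ∈ Ioc 0 R, HasDerivWithinAt E (2 * s t * s' t * φ t + s t ^ 2 * φ' t
      - n * (s' t * s' t + s t * (-(κ / n) * s t))) (Ioc 0 R) t := fun t ht => by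
    refine ((((hs t).hasDerivWithinAt.fun_pow 2).fun_mul (hφ t ht)).fun_sub
      (((hs t).fun_mul (hs' t)).hasDerivWithinAt.const_mul n)).congr_deriv ?_
    push_cast
    ring
  have hanti : AntitoneOn E (Ioc 0 R) := by
    refine antitoneOn_of_deriv_nonpos (convex_Ioc 0 R)
      (fun t ht => (hE t ht).continuousWithinAt) ?_ ?_ <;> rw [interior_Ioc]
    · exact fun t ht => (hE t (Ioo_subset_Ioc_self ht)).differentiableWithinAt.mono
        Ioo_subset_Ioc_self
    · intro t ht
      rw [((hE t (Ioo_subset_Ioc_self ht)).hasDerivAt (Ioc_mem_nhds ht.1 ht.2)).deriv]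
      exact riccati_energy_deriv_nonpos hn (hRic t (Ioo_subset_Ioc_self ht))
  have hE0 : Tendsto E (𝓝[>] 0) (𝓝 0) := by
    have hss' : Tendsto (fun t => n * (s t * s' t)) (𝓝[>] 0) (𝓝 0) := by
      have := (((hs 0).continuousAt.mul (hs' 0).continuousAt).const_mul n).tendsto
      simpa [hs0] using this.mono_left nhdsWithin_le_nhds
    simpa using (tendsto_sq_mul_nhdsGT_zero (hs 0) hs0 hlim).sub hss'
  have hER : E R ≤ 0 := by
    refine ge_of_tendsto hE0 ?_
    filter_upwards [Ioo_mem_nhdsGT hR] with t ht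
    exact hanti (Ioo_subset_Ioc_self ht) (right_mem_Ioc.2 hR) ht.2.le
  rw [le_div_iff₀ hsR]
  refine le_of_mul_le_mul_left ?_ hsR
  linarith [show E R = s R ^ 2 * φ R - n * (s R * s' R) from rfl]

lemma sqrt_mul_eq_mul_sqrt_div (hn : 0 < n) (x : ℝ) : √(n * x) = n * √(x / n) := by
  rw [show n * x = n ^ 2 * (x / n) by field_simp, sqrt_mul (sq_nonneg n), sqrt_sq hn.le]

theorem riccati_le_sqrt_mul_cot (hn : 0 < n) (hκ : 0 < κ) (hR : 0 < R)
    (hRκ : R < π * √(n / κ))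
    (hφ : ∀ t ∈ Ioc 0 R, HasDerivWithinAt φ (φ' t) (Ioc 0 R) t)
    (hRic : ∀ t ∈ Ioc 0 R, -(φ' t) ≥ (1 / n) * (φ t) ^ 2 + κ)
    (hlim : Tendsto (fun t => t ^ 2 * φ t) (𝓝[>] 0) (𝓝 0)) :
    φ R ≤ √(n * κ) * cot (√(κ / n) * R) := by
  set a := √(κ / n)
  have ha : 0 < a := sqrt_pos.2 (div_pos hκ hn)
  have ha2 : κ / n = a ^ 2 := (sq_sqrt (div_pos hκ hn).le).symm
  have haR : a * R < π := by
    have hinv : √(n / κ) = a⁻¹ := by rw [← inv_div, sqrt_inv]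
    calc a * R < a * (π * a⁻¹) := by rw [← hinv]; exact mul_lt_mul_of_pos_left hRκ ha
      _ = π := by field_simp
  have key := riccati_comparison hn hφ hRic hlim (hasDerivAt_sin_mul a)
    (fun t => by rw [ha2]; exact hasDerivAt_mul_cos_mul a t) (by simp) hR
    (sin_pos_of_pos_of_lt_pi (mul_pos ha hR) haR)
  rw [sqrt_mul_eq_mul_sqrt_div hn, cot_eq_cos_div_sin]
  calc φ R ≤ n * (a * cos (a * R)) / sin (a * R) := key
    _ = n * a * (cos (a * R) / sin (a * R)) := by ring

theorem riccati_le_div (hn : 0 < n) (hR : 0 < R)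
    (hφ : ∀ t ∈ Ioc 0 R, HasDerivWithinAt φ (φ' t) (Ioc 0 R) t)
    (hRic : ∀ t ∈ Ioc 0 R, -(φ' t) ≥ (1 / n) * (φ t) ^ 2)
    (hlim : Tendsto (fun t => t ^ 2 * φ t) (𝓝[>] 0) (𝓝 0)) :
    φ R ≤ n / R := by
  simpa using riccati_comparison (κ := 0) hn hφ (by simpa using hRic) hlim hasDerivAt_id
    (fun t => by simpa using hasDerivAt_const t (1 : ℝ)) rfl hR hR

theorem riccati_le_sqrt_mul_coth (hn : 0 < n) (hκ : κ < 0) (hR : 0 < R)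
    (hφ : ∀ t ∈ Ioc 0 R, HasDerivWithinAt φ (φ' t) (Ioc 0 R) t)
    (hRic : ∀ t ∈ Ioc 0 R, -(φ' t) ≥ (1 / n) * (φ t) ^ 2 + κ)
    (hlim : Tendsto (fun t => t ^ 2 * φ t) (𝓝[>] 0) (𝓝 0)) :
    φ R ≤ √(n * |κ|) * (cosh (√(|κ| / n) * R) / sinh (√(|κ| / n) * R)) := by
  set a := √(|κ| / n)
  have hκ' : 0 < |κ| := abs_pos.2 hκ.ne
  have ha : 0 < a := sqrt_pos.2 (div_pos hκ' hn)
  have ha2 : -(κ / n) = a ^ 2 := by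
    rw [sq_sqrt (div_pos hκ' hn).le, abs_of_neg hκ, neg_div]
  have key := riccati_comparison hn hφ hRic hlim (hasDerivAt_sinh_mul a)
    (fun t => by rw [ha2]; exact hasDerivAt_mul_cosh_mul a t) (by simp) hR
    (sinh_pos_iff.2 (mul_pos ha hR))
  rw [sqrt_mul_eq_mul_sqrt_div hn]
  calc φ R ≤ n * (a * cosh (a * R)) / sinh (a * R) := key
    _ = n * a * (cosh (a * R) / sinh (a * R)) := by ring

end Comparison

/-- Analytic content of the horizontal Laplacian comparison theorem with constant
curvature bound `κ`: a Riccati comparison for `φ` with the explicit `cot`/`coth`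
bounds (here `cot x = cos x / sin x` and `coth x = cosh x / sinh x`). -/
theorem stmt_3 (n κ R : ℝ) (hn : 0 < n) (hR : 0 < R)
    (φ φ' : ℝ → ℝ)
    (hφ : ∀ t ∈ Set.Ioc 0 R, HasDerivWithinAt φ (φ' t) (Set.Ioc 0 R) t)
    (hRic : ∀ t ∈ Set.Ioc 0 R, -(φ' t) ≥ (1 / n) * (φ t) ^ 2 + κ)
    (hlim : Filter.Tendsto (fun t => t ^ 2 * φ t) (nhdsWithin 0 (Set.Ioi 0)) (nhds 0))
    (hRκ : 0 < κ → R < Real.pi * Real.sqrt (n / κ)) :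
    (0 < κ → φ R ≤ Real.sqrt (n * κ) * Real.cot (Real.sqrt (κ / n) * R))
    ∧ (κ = 0 → φ R ≤ n / R)
    ∧ (κ < 0 → φ R ≤ Real.sqrt (n * |κ|) *
        (Real.cosh (Real.sqrt (|κ| / n) * R) / Real.sinh (Real.sqrt (|κ| / n) * R))) := by
  refine ⟨fun hκ => riccati_le_sqrt_mul_cot hn hκ hR (hRκ hκ) hφ hRic hlim,
    fun hκ => riccati_le_div hn hR hφ (by simpa [hκ] using hRic) hlim,
    fun hκ => riccati_le_sqrt_mul_coth hn hκ hR hφ hRic hlim⟩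
end

section
/- For every μ ∈ ℝ and every r > 0 — where in the case μ < 0 one additionally assumes cos(√(−μ)·r/2) ≠ 0 — one has ψ_μ'(r)² − ψ_μ(r)·φ_μ(r) = r·φ_μ(r)·Ψ_μ(r/2). -/
/-- `φ_μ(r)`: `sinh(√μ r)/√μ` if `μ > 0`, `r` if `μ = 0`, `sin(√(-μ) r)/√(-μ)` if `μ < 0`. -/
noncomputable def phiMu (μ r : ℝ) : ℝ :=
  if 0 < μ then Real.sinh (Real.sqrt μ * r) / Real.sqrt μ
  else if μ = 0 then r
  else Real.sin (Real.sqrt (-μ) * r) / Real.sqrt (-μ)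

/-- `ψ_μ(r)`: `(sinh(√μ r) - √μ r)/μ^{3/2}` if `μ > 0`, `r³/6` if `μ = 0`,
`(√(-μ) r - sin(√(-μ) r))/(-μ)^{3/2}` if `μ < 0`. -/
noncomputable def psiMu (μ r : ℝ) : ℝ :=
  if 0 < μ then (Real.sinh (Real.sqrt μ * r) - Real.sqrt μ * r) / Real.sqrt μ ^ 3
  else if μ = 0 then r ^ 3 / 6
  else (Real.sqrt (-μ) * r - Real.sin (Real.sqrt (-μ) * r)) / Real.sqrt (-μ) ^ 3

/-- `Ψ_μ(r)`: `(√μ - tanh(√μ r)/r)/μ^{3/2}` if `μ > 0`, `r²/3` if `μ = 0`,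
`(tan(√(-μ) r)/r - √(-μ))/(-μ)^{3/2}` if `μ < 0`. -/
noncomputable def PsiMu (μ r : ℝ) : ℝ :=
  if 0 < μ then (Real.sqrt μ - Real.tanh (Real.sqrt μ * r) / r) / Real.sqrt μ ^ 3
  else if μ = 0 then r ^ 2 / 3
  else (Real.tan (Real.sqrt (-μ) * r) / r - Real.sqrt (-μ)) / Real.sqrt (-μ) ^ 3

/-!
With `a = √|μ|` and `x = a r / 2`, each case reduces to a half-angle identity: for `μ < 0`,
`(1 - cos 2x)² - (2x - sin 2x) sin 2x = 2 sin 2x (tan x - x)`, and its hyperbolic analogue for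
`μ > 0`; both sides of the theorem are these identities divided by `a⁴`.
-/

open Real

theorem sq_one_sub_cos_two_mul_sub_mul_sin_two_mul {x : ℝ} (hx : cos x ≠ 0) :
    (1 - cos (2 * x)) ^ 2 - (2 * x - sin (2 * x)) * sin (2 * x) = 2 * sin (2 * x) * (tan x - x) :=
  have h_half : 1 - cos (2 * x) = 2 * sin x ^ 2 := by rw [cos_two_mul, sin_sq]; ring
  calc _ = 4 * sin x ^ 2 - 4 * x * sin x * cos x := by
        rw [h_half, sin_two_mul]
        linear_combination 4 * sin x ^ 2 * sin_sq_add_cos_sq x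
    _ = _ := by
        rw [sin_two_mul, tan_eq_sin_div_cos]
        field_simp
        ring

theorem sq_cosh_two_mul_sub_one_sub_mul_sinh_two_mul (x : ℝ) :
    (cosh (2 * x) - 1) ^ 2 - (sinh (2 * x) - 2 * x) * sinh (2 * x)
      = 2 * sinh (2 * x) * (x - tanh x) :=
  have h_half : cosh (2 * x) - 1 = 2 * sinh x ^ 2 := by rw [cosh_two_mul, cosh_sq]; ring
  calc _ = 4 * x * sinh x * cosh x - 4 * sinh x ^ 2 := by
        rw [h_half, sinh_two_mul]
        linear_combination -4 * sinh x ^ 2 * cosh_sq_sub_sinh_sq x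
    _ = _ := by
        rw [sinh_two_mul, tanh_eq_sinh_div_cosh]
        field_simp
        ring

/-- At `r = 0` the quotient is the junk value `0`, hence the hypothesis `f 0 = 0`. -/
theorem mul_div_half_of_map_zero {f : ℝ → ℝ} (hf : f 0 = 0) (r : ℝ) :
    r * (f (r / 2) / (r / 2)) = 2 * f (r / 2) := by
  rcases eq_or_ne r 0 with rfl | hr
  · simp [hf]
  · field_simp

theorem deriv_psiMu_zero (r : ℝ) : deriv (psiMu 0) r = r ^ 2 / 2 := by
  have h_psi : psiMu 0 = fun x ↦ x ^ 3 / 6 := funext fun x ↦ by simp [psiMu]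
  rw [h_psi, ((hasDerivAt_pow 3 r).div_const 6).deriv]
  ring

section Pos

variable {μ : ℝ} (hμ : 0 < μ)
include hμ

theorem psiMu_of_pos (r : ℝ) : psiMu μ r = (sinh (√μ * r) - √μ * r) / √μ ^ 3 := by
  simp [psiMu, hμ]

theorem deriv_psiMu_of_pos (r : ℝ) : deriv (psiMu μ) r = (cosh (√μ * r) - 1) / √μ ^ 2 := by
  have h_lin : HasDerivAt (fun x ↦ √μ * x) √μ r := by
    simpa using (hasDerivAt_id r).const_mul √μ
  have h_psi : HasDerivAt (fun x ↦ (sinh (√μ * x) - √μ * x) / √μ ^ 3)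
      ((cosh (√μ * r) * √μ - √μ) / √μ ^ 3) r := (h_lin.sinh.sub h_lin).div_const _
  rw [funext (psiMu_of_pos hμ), h_psi.deriv]
  field_simp [(sqrt_pos.2 hμ).ne']

theorem phiMu_of_pos (r : ℝ) : phiMu μ r = sinh (√μ * r) / √μ := by
  simp [phiMu, hμ]

theorem mul_PsiMu_half_of_pos (r : ℝ) :
    r * PsiMu μ (r / 2) = (√μ * r - 2 * tanh (√μ * (r / 2))) / √μ ^ 3 := by
  have := mul_div_half_of_map_zero (f := fun x ↦ tanh (√μ * x)) (by simp) r
  simp only [PsiMu, if_pos hμ] at this ⊢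
  rw [mul_div_assoc', mul_sub, this, mul_comm]

end Pos

section Neg

variable {μ : ℝ} (hμ : μ < 0)
include hμ

theorem psiMu_of_neg (r : ℝ) : psiMu μ r = (√(-μ) * r - sin (√(-μ) * r)) / √(-μ) ^ 3 := by
  simp [psiMu, hμ.not_gt, hμ.ne]

theorem deriv_psiMu_of_neg (r : ℝ) : deriv (psiMu μ) r = (1 - cos (√(-μ) * r)) / √(-μ) ^ 2 := by
  have h_lin : HasDerivAt (fun x ↦ √(-μ) * x) √(-μ) r := by
    simpa using (hasDerivAt_id r).const_mul √(-μ)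
  have h_psi : HasDerivAt (fun x ↦ (√(-μ) * x - sin (√(-μ) * x)) / √(-μ) ^ 3)
      ((√(-μ) - cos (√(-μ) * r) * √(-μ)) / √(-μ) ^ 3) r := (h_lin.sub h_lin.sin).div_const _
  rw [funext (psiMu_of_neg hμ), h_psi.deriv]
  field_simp [(sqrt_pos.2 (neg_pos.2 hμ)).ne']

theorem phiMu_of_neg (r : ℝ) : phiMu μ r = sin (√(-μ) * r) / √(-μ) := by
  simp [phiMu, hμ.not_gt, hμ.ne]

theorem mul_PsiMu_half_of_neg (r : ℝ) :
    r * PsiMu μ (r / 2) = (2 * tan (√(-μ) * (r / 2)) - √(-μ) * r) / √(-μ) ^ 3 := by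
  have := mul_div_half_of_map_zero (f := fun x ↦ tan (√(-μ) * x)) (by simp) r
  simp only [PsiMu, hμ.not_gt, hμ.ne, if_false] at this ⊢
  rw [mul_div_assoc', mul_sub, this, mul_comm r]

end Neg

theorem stmt_6_general (μ r : ℝ)
    (h : μ < 0 → Real.cos (Real.sqrt (-μ) * (r / 2)) ≠ 0) :
    (deriv (psiMu μ) r) ^ 2 - psiMu μ r * phiMu μ r = r * phiMu μ r * PsiMu μ (r / 2) := by
  rcases lt_trichotomy μ 0 with hμ | rfl | hμ
  · have key := sq_one_sub_cos_two_mul_sub_mul_sin_two_mul (h hμ)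
    rw [deriv_psiMu_of_neg hμ, psiMu_of_neg hμ, phiMu_of_neg hμ, mul_right_comm,
      mul_PsiMu_half_of_neg hμ, show √(-μ) * r = 2 * (√(-μ) * (r / 2)) by ring]
    linear_combination key / √(-μ) ^ 4
  · simp only [deriv_psiMu_zero, psiMu, phiMu, PsiMu, lt_self_iff_false, ↓reduceIte]
    ring
  · have key := sq_cosh_two_mul_sub_one_sub_mul_sinh_two_mul (√μ * (r / 2))
    rw [deriv_psiMu_of_pos hμ, psiMu_of_pos hμ, phiMu_of_pos hμ, mul_right_comm,
      mul_PsiMu_half_of_pos hμ, show √μ * r = 2 * (√μ * (r / 2)) by ring]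
    linear_combination key / √μ ^ 4

/-- `ψ_μ'(r)² - ψ_μ(r) φ_μ(r) = r φ_μ(r) Ψ_μ(r/2)` (used to factor the constant `C_ε`). -/
theorem stmt_6 (μ r : ℝ) (hr : 0 < r)
    (h : μ < 0 → Real.cos (Real.sqrt (-μ) * (r / 2)) ≠ 0) :
    (deriv (psiMu μ) r) ^ 2 - psiMu μ r * phiMu μ r = r * phiMu μ r * PsiMu μ (r / 2) :=
  stmt_6_general μ r h
end

section
/- Let ε ≥ 0, k ∈ ℝ and r > 0, and if k > 0 assume √k·r ≤ π. Then C_ε := ψ_{−k}'(r)² − ψ_{−k}(r)·φ_{−k}(r) + ε·r·φ_{−k}(r) > 0. -/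
/-!
Write `s = √|k|` and `x = s r`. Using `cosh² - sinh² = 1` (resp. `sin² + cos² = 1`), the
`ε = 0` part of the constant is `(x sinh x - 2 cosh x + 2) / s⁴` for `k < 0`,
`(2 - 2 cos x - x sin x) / s⁴` for `k > 0`, and `r⁴ / 12` for `k = 0`. The half-angle formulas
factor the numerators as `4 sinh t (t cosh t - sinh t)` and `4 sin t (sin t - t cos t)` with
`t = x / 2`; a monotonicity argument makes the first positive for `t > 0` and the second for
`0 < t < π`. Finally `φ_{-k}(r) ≥ 0` because `x ≤ π` when `k > 0`, so the `ε`-term is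
nonnegative.
-/

open Real

namespace Real

theorem sinh_lt_mul_cosh {x : ℝ} (hx : 0 < x) : sinh x < x * cosh x := by
  have hmono : StrictMonoOn (fun y ↦ y * cosh y - sinh y) (Set.Ici 0) := by
    refine strictMonoOn_of_deriv_pos (convex_Ici 0) (by fun_prop) fun y hy ↦ ?_
    rw [interior_Ici] at hy
    have hderiv : HasDerivAt (fun y ↦ y * cosh y - sinh y) (y * sinh y) y :=
      (((hasDerivAt_id y).mul (hasDerivAt_cosh y)).sub (hasDerivAt_sinh y)).congr_deriv
        (by simp)
    rw [hderiv.deriv]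
    exact mul_pos hy (sinh_pos_iff.2 hy)
  simpa using hmono Set.self_mem_Ici (Set.mem_Ici.2 hx.le) hx

theorem mul_cos_lt_sin {x : ℝ} (hx : 0 < x) (hxπ : x ≤ π) : x * cos x < sin x := by
  have hmono : StrictMonoOn (fun y ↦ sin y - y * cos y) (Set.Icc 0 π) := by
    refine strictMonoOn_of_deriv_pos (convex_Icc 0 π) (by fun_prop) fun y hy ↦ ?_
    rw [interior_Icc] at hy
    have hderiv : HasDerivAt (fun y ↦ sin y - y * cos y) (y * sin y) y :=
      ((hasDerivAt_sin y).sub ((hasDerivAt_id y).mul (hasDerivAt_cos y))).congr_deriv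
        (by simp)
    rw [hderiv.deriv]
    exact mul_pos hy.1 (sin_pos_of_pos_of_lt_pi hy.1 hy.2)
  simpa using hmono (Set.left_mem_Icc.2 pi_pos.le) ⟨hx.le, hxπ⟩ hx

theorem two_mul_cosh_sub_two_lt_mul_sinh {x : ℝ} (hx : 0 < x) :
    2 * cosh x - 2 < x * sinh x := by
  obtain ⟨t, rfl⟩ : ∃ t, x = 2 * t := ⟨x / 2, by ring⟩
  have ht : 0 < t := by linarith
  have hfactor : 2 * t * sinh (2 * t) - (2 * cosh (2 * t) - 2) =
      4 * sinh t * (t * cosh t - sinh t) := by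
    rw [sinh_two_mul, cosh_two_mul, cosh_sq]; ring
  have := mul_pos (sinh_pos_iff.2 ht) (sub_pos.2 (sinh_lt_mul_cosh ht))
  linarith

theorem mul_sin_lt_two_sub_two_mul_cos {x : ℝ} (hx : 0 < x) (hx2π : x < 2 * π) :
    x * sin x < 2 - 2 * cos x := by
  obtain ⟨t, rfl⟩ : ∃ t, x = 2 * t := ⟨x / 2, by ring⟩
  have ht : 0 < t := by linarith
  have htπ : t < π := by linarith
  have hfactor : 2 - 2 * cos (2 * t) - 2 * t * sin (2 * t) =
      4 * sin t * (sin t - t * cos t) := by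
    rw [sin_two_mul, cos_two_mul_eq_one_sub]; ring
  have := mul_pos (sin_pos_of_pos_of_lt_pi ht htπ) (sub_pos.2 (mul_cos_lt_sin ht htπ.le))
  linarith

end Real

section

variable {μ r : ℝ}

theorem hasDerivAt_psiMu_of_pos (hμ : 0 < μ) (r : ℝ) :
    HasDerivAt (psiMu μ) ((cosh (√μ * r) - 1) / √μ ^ 2) r := by
  have hψ : psiMu μ = fun x ↦ (sinh (√μ * x) - √μ * x) / √μ ^ 3 := by
    funext x; simp [psiMu, hμ]
  have hlin : HasDerivAt (fun x ↦ √μ * x) √μ r := by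
    simpa using (hasDerivAt_id r).const_mul √μ
  rw [hψ]
  have : √μ ≠ 0 := (sqrt_pos.2 hμ).ne'
  exact ((((hasDerivAt_sinh _).comp r hlin).sub hlin).div_const (√μ ^ 3)).congr_deriv
    (by field_simp)

theorem hasDerivAt_psiMu_zero (r : ℝ) : HasDerivAt (psiMu 0) (r ^ 2 / 2) r := by
  have hψ : psiMu 0 = fun x ↦ x ^ 3 / 6 := by
    funext x; simp [psiMu]
  rw [hψ]
  exact ((hasDerivAt_pow 3 r).div_const 6).congr_deriv (by norm_num; ring)

theorem hasDerivAt_psiMu_of_neg (hμ : μ < 0) (r : ℝ) :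
    HasDerivAt (psiMu μ) ((1 - cos (√(-μ) * r)) / √(-μ) ^ 2) r := by
  have hψ : psiMu μ = fun x ↦ (√(-μ) * x - sin (√(-μ) * x)) / √(-μ) ^ 3 := by
    funext x; simp [psiMu, hμ.not_gt, hμ.ne]
  have hlin : HasDerivAt (fun x ↦ √(-μ) * x) √(-μ) r := by
    simpa using (hasDerivAt_id r).const_mul √(-μ)
  rw [hψ]
  have : √(-μ) ≠ 0 := (sqrt_pos.2 (neg_pos.2 hμ)).ne'
  exact ((hlin.sub ((hasDerivAt_sin _).comp r hlin)).div_const (√(-μ) ^ 3)).congr_deriv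
    (by field_simp)

theorem sq_deriv_psiMu_sub_psiMu_mul_phiMu_pos_of_pos (hμ : 0 < μ) (hr : 0 < r) :
    0 < deriv (psiMu μ) r ^ 2 - psiMu μ r * phiMu μ r := by
  have hs : 0 < √μ := sqrt_pos.2 hμ
  rw [(hasDerivAt_psiMu_of_pos hμ r).deriv]
  simp only [psiMu, phiMu, if_pos hμ]
  set x := √μ * r
  have hx : 0 < x := mul_pos hs hr
  have hquot : ((cosh x - 1) / √μ ^ 2) ^ 2 - (sinh x - x) / √μ ^ 3 * (sinh x / √μ) =
      (x * sinh x - (2 * cosh x - 2)) / √μ ^ 4 := by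
    field_simp
    linear_combination cosh_sq x
  rw [hquot]
  exact div_pos (sub_pos.2 (two_mul_cosh_sub_two_lt_mul_sinh hx)) (by positivity)

theorem sq_deriv_psiMu_sub_psiMu_mul_phiMu_pos_zero (hr : r ≠ 0) :
    0 < deriv (psiMu 0) r ^ 2 - psiMu 0 r * phiMu 0 r := by
  rw [(hasDerivAt_psiMu_zero r).deriv]
  simp only [psiMu, phiMu, lt_irrefl, if_false, if_true]
  have : 0 < r ^ 4 := by positivity
  linarith

theorem sq_deriv_psiMu_sub_psiMu_mul_phiMu_pos_of_neg (hμ : μ < 0) (hr : 0 < r)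
    (hr2π : √(-μ) * r < 2 * π) :
    0 < deriv (psiMu μ) r ^ 2 - psiMu μ r * phiMu μ r := by
  have hs : 0 < √(-μ) := sqrt_pos.2 (neg_pos.2 hμ)
  rw [(hasDerivAt_psiMu_of_neg hμ r).deriv]
  simp only [psiMu, phiMu, if_neg hμ.not_gt, if_neg hμ.ne]
  set x := √(-μ) * r
  have hx : 0 < x := mul_pos hs hr
  have hquot : ((1 - cos x) / √(-μ) ^ 2) ^ 2 - (x - sin x) / √(-μ) ^ 3 * (sin x / √(-μ)) =
      (2 - 2 * cos x - x * sin x) / √(-μ) ^ 4 := by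
    field_simp
    linear_combination sin_sq_add_cos_sq x
  rw [hquot]
  exact div_pos (sub_pos.2 (mul_sin_lt_two_sub_two_mul_cos hx hr2π)) (by positivity)

theorem phiMu_nonneg (hr : 0 ≤ r) (hμ : μ < 0 → √(-μ) * r ≤ π) : 0 ≤ phiMu μ r := by
  unfold phiMu
  split_ifs with hpos hzero
  · exact div_nonneg (sinh_nonneg_iff.2 (by positivity)) (sqrt_nonneg μ)
  · exact hr
  · have hneg : μ < 0 := lt_of_le_of_ne (not_lt.1 hpos) hzero
    exact div_nonneg (sin_nonneg_of_nonneg_of_le_pi (by positivity) (hμ hneg)) (sqrt_nonneg _)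

end

/-- Positivity of the constant `C_ε = ψ_{-k}'(r)² - ψ_{-k}(r) φ_{-k}(r) + ε r φ_{-k}(r)`
from Lemma 4.1(b). -/
theorem stmt_10 (ε k r : ℝ) (hε : 0 ≤ ε) (hr : 0 < r)
    (hk : 0 < k → Real.sqrt k * r ≤ Real.pi) :
    0 < (deriv (psiMu (-k)) r) ^ 2 - psiMu (-k) r * phiMu (-k) r + ε * r * phiMu (-k) r := by
  have hkπ : -k < 0 → √(-(-k)) * r ≤ π := fun h ↦ by simpa using hk (neg_lt_zero.1 h)
  have hC₀ : 0 < deriv (psiMu (-k)) r ^ 2 - psiMu (-k) r * phiMu (-k) r := by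
    rcases lt_trichotomy (-k) 0 with hneg | hzero | hpos
    · exact sq_deriv_psiMu_sub_psiMu_mul_phiMu_pos_of_neg hneg hr
        ((hkπ hneg).trans_lt (by linarith [pi_pos]))
    · exact hzero ▸ sq_deriv_psiMu_sub_psiMu_mul_phiMu_pos_zero hr.ne'
    · exact sq_deriv_psiMu_sub_psiMu_mul_phiMu_pos_of_pos hpos hr
  have hεφ : 0 ≤ ε * r * phiMu (-k) r := mul_nonneg (mul_nonneg hε hr.le) (phiMu_nonneg hr.le hkπ)
  linarith
end

section
/- Let a, κ ∈ ℝ, set μ = −a²/4 − κ, let r > 0 with φ_μ(r) ≠ 0, and let z₀ ∈ ℂ. Then the function Z(t) = e^{i·a·(r−t)/2}·(φ_μ(t)/φ_μ(r))·z₀ is the unique twice differentiable function Z : ℝ → ℂ satisfying Z''(t) + i·a·Z'(t) + κ·Z(t) = 0 for all t ∈ ℝ, Z(0) = 0 and Z(r) = z₀. -/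
/-!
The gauge transformation `W(t) = e^{iat/2} Z(t)` turns `Z'' + i a Z' + κ Z = 0` into
`W'' = μ W`. Writing `c_μ = φ_μ'` (so that `c_μ' = μ φ_μ`), the quantities `c_μ W - φ_μ W'` and
`c_μ W' - μ φ_μ W` are conserved along any solution of `W'' = μ W`, and the Wronskian identity
`c_μ² - μ φ_μ² = 1` turns them into `W = c_μ W(0) + φ_μ W'(0)`. So a solution with `Z(0) = 0` is
a multiple of `e^{-iat/2} φ_μ(t)`, and `Z(r) = z₀` fixes the multiple because `φ_μ(r) ≠ 0`.
-/

noncomputable def cosMu (μ t : ℝ) : ℝ :=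
  if 0 < μ then Real.cosh (Real.sqrt μ * t)
  else if μ = 0 then 1
  else Real.cos (Real.sqrt (-μ) * t)

section Branches

variable {μ : ℝ}

lemma phiMu_of_neg_s12 (hμ : μ < 0) :
    phiMu μ = fun t => Real.sin (Real.sqrt (-μ) * t) / Real.sqrt (-μ) := by
  ext; simp [phiMu, hμ.not_gt, hμ.ne]

lemma cosMu_of_neg (hμ : μ < 0) : cosMu μ = fun t => Real.cos (Real.sqrt (-μ) * t) := by
  ext; simp [cosMu, hμ.not_gt, hμ.ne]

lemma phiMu_of_pos_s12 (hμ : 0 < μ) :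
    phiMu μ = fun t => Real.sinh (Real.sqrt μ * t) / Real.sqrt μ := by
  ext; simp [phiMu, hμ]

lemma cosMu_of_pos (hμ : 0 < μ) : cosMu μ = fun t => Real.cosh (Real.sqrt μ * t) := by
  ext; simp [cosMu, hμ]

end Branches

@[simp]
lemma phiMu_zero (μ : ℝ) : phiMu μ 0 = 0 := by
  unfold phiMu; split_ifs <;> simp

@[simp]
lemma cosMu_zero (μ : ℝ) : cosMu μ 0 = 1 := by
  unfold cosMu; split_ifs <;> simp

lemma hasDerivAt_phiMu (μ t : ℝ) : HasDerivAt (phiMu μ) (cosMu μ t) t := by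
  rcases lt_trichotomy μ 0 with hμ | rfl | hμ
  · have hs : Real.sqrt (-μ) ≠ 0 := (Real.sqrt_pos.2 (neg_pos.2 hμ)).ne'
    rw [phiMu_of_neg_s12 hμ, cosMu_of_neg hμ]
    exact (((hasDerivAt_id' t).const_mul _).sin.div_const _).congr_deriv (by field_simp)
  · have h0 : phiMu 0 = id := by ext; simp [phiMu]
    simpa [h0, cosMu] using hasDerivAt_id t
  · have hs : Real.sqrt μ ≠ 0 := (Real.sqrt_pos.2 hμ).ne'
    rw [phiMu_of_pos_s12 hμ, cosMu_of_pos hμ]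
    exact (((hasDerivAt_id' t).const_mul _).sinh.div_const _).congr_deriv (by field_simp)

lemma hasDerivAt_cosMu (μ t : ℝ) : HasDerivAt (cosMu μ) (μ * phiMu μ t) t := by
  rcases lt_trichotomy μ 0 with hμ | rfl | hμ
  · have hs : Real.sqrt (-μ) ^ 2 = -μ := Real.sq_sqrt (neg_pos.2 hμ).le
    have hs' : Real.sqrt (-μ) ≠ 0 := (Real.sqrt_pos.2 (neg_pos.2 hμ)).ne'
    rw [phiMu_of_neg_s12 hμ, cosMu_of_neg hμ]
    refine ((hasDerivAt_id' t).const_mul _).cos.congr_deriv ?_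
    field_simp
    linear_combination -Real.sin (Real.sqrt (-μ) * t) * hs
  · have h0 : cosMu 0 = fun _ => 1 := by ext; simp [cosMu]
    simpa [h0] using hasDerivAt_const t (1 : ℝ)
  · have hs : Real.sqrt μ ^ 2 = μ := Real.sq_sqrt hμ.le
    rw [phiMu_of_pos_s12 hμ, cosMu_of_pos hμ]
    refine ((hasDerivAt_id' t).const_mul _).cosh.congr_deriv ?_
    field_simp
    linear_combination Real.sinh (Real.sqrt μ * t) * hs

lemma cosMu_sq_sub_mul_phiMu_sq (μ t : ℝ) : cosMu μ t ^ 2 - μ * phiMu μ t ^ 2 = 1 := by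
  have h : ∀ s, HasDerivAt (fun s => cosMu μ s ^ 2 - μ * phiMu μ s ^ 2) 0 s := fun s => by
    refine (((hasDerivAt_cosMu μ s).fun_pow 2).sub
      (((hasDerivAt_phiMu μ s).fun_pow 2).const_mul μ)).congr_deriv ?_
    norm_num
    ring
  simpa using
    is_const_of_deriv_eq_zero (fun s => (h s).differentiableAt) (fun s => (h s).deriv) t 0

theorem eq_cosMu_smul_add_phiMu_smul_of_hasDerivAt {E : Type*} [NormedAddCommGroup E]
    [NormedSpace ℝ E] {μ : ℝ} {W W' : ℝ → E} (hW : ∀ t, HasDerivAt W (W' t) t)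
    (hW' : ∀ t, HasDerivAt W' (μ • W t) t) (t : ℝ) :
    W t = cosMu μ t • W 0 + phiMu μ t • W' 0 := by
  have hP : ∀ s, HasDerivAt (fun s => cosMu μ s • W s - phiMu μ s • W' s) 0 s := fun s =>
    (((hasDerivAt_cosMu μ s).smul (hW s)).sub ((hasDerivAt_phiMu μ s).smul (hW' s))).congr_deriv
      (by module)
  have hQ : ∀ s, HasDerivAt (fun s => cosMu μ s • W' s - (μ * phiMu μ s) • W s) 0 s := fun s =>
    (((hasDerivAt_cosMu μ s).smul (hW' s)).sub
      (((hasDerivAt_phiMu μ s).const_mul μ).smul (hW s))).congr_deriv (by module)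
  have hP0 :=
    is_const_of_deriv_eq_zero (fun s => (hP s).differentiableAt) (fun s => (hP s).deriv) t 0
  have hQ0 :=
    is_const_of_deriv_eq_zero (fun s => (hQ s).differentiableAt) (fun s => (hQ s).deriv) t 0
  simp only [cosMu_zero, phiMu_zero, one_smul, zero_smul, sub_zero, mul_zero] at hP0 hQ0
  calc W t = (cosMu μ t ^ 2 - μ * phiMu μ t ^ 2) • W t := by
        rw [cosMu_sq_sub_mul_phiMu_sq, one_smul]
    _ = cosMu μ t • (cosMu μ t • W t - phiMu μ t • W' t)
        + phiMu μ t • (cosMu μ t • W' t - (μ * phiMu μ t) • W t) := by module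
    _ = cosMu μ t • W 0 + phiMu μ t • W' 0 := by rw [hP0, hQ0]

open Complex

lemma hasDerivAt_cexp_mul_mul (c : ℂ) {f : ℝ → ℂ} {f' : ℂ} {t : ℝ} (hf : HasDerivAt f f' t) :
    HasDerivAt (fun t : ℝ => cexp (c * t) * f t) (cexp (c * t) * (f' + c * f t)) t := by
  have hlin : HasDerivAt (fun t : ℝ => c * (t : ℂ)) c t := by
    simpa using (hasDerivAt_id' t).ofReal_comp.const_mul c
  exact (hlin.cexp.mul hf).congr_deriv (by ring)

def IsJacobiSolution (a κ : ℝ) (Z : ℝ → ℂ) : Prop :=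
  (∀ t, DifferentiableAt ℝ Z t) ∧ (∀ t, DifferentiableAt ℝ (deriv Z) t) ∧
    ∀ t, deriv (deriv Z) t + I * a * deriv Z t + κ * Z t = 0

section Gauge

variable {a κ μ : ℝ}

theorem isJacobiSolution_cexp_mul (hμ : μ = -a ^ 2 / 4 - κ) {W W' : ℝ → ℂ}
    (hW : ∀ t, HasDerivAt W (W' t) t) (hW' : ∀ t, HasDerivAt W' (μ * W t) t) :
    IsJacobiSolution a κ (fun t => cexp (-(I * a / 2) * t) * W t) := by
  set c : ℂ := -(I * a / 2)
  have hZ : ∀ t : ℝ, HasDerivAt (fun t : ℝ => cexp (c * t) * W t)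
      (cexp (c * t) * (W' t + c * W t)) t :=
    fun t => hasDerivAt_cexp_mul_mul c (hW t)
  have hZ' : ∀ t : ℝ, HasDerivAt (fun t : ℝ => cexp (c * t) * (W' t + c * W t))
      (cexp (c * t) * ((μ * W t + c * W' t) + c * (W' t + c * W t))) t :=
    fun t => hasDerivAt_cexp_mul_mul c ((hW' t).add ((hW t).const_mul c))
  have hd : deriv (fun t : ℝ => cexp (c * t) * W t) =
      fun t : ℝ => cexp (c * t) * (W' t + c * W t) :=
    funext fun t => (hZ t).deriv
  refine ⟨fun t => (hZ t).differentiableAt, fun t => hd ▸ (hZ' t).differentiableAt,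
    fun t => ?_⟩
  rw [hd, (hZ' t).deriv]
  have hμ' : (μ : ℂ) = -a ^ 2 / 4 - κ := mod_cast hμ
  linear_combination cexp (c * t) * W t * hμ' - cexp (c * t) * W t * a ^ 2 / 4 * I_sq

theorem IsJacobiSolution.eq_cexp_mul (hμ : μ = -a ^ 2 / 4 - κ) {Z : ℝ → ℂ}
    (hZ : IsJacobiSolution a κ Z) (t : ℝ) :
    Z t = cexp (-(I * a / 2) * t) *
      (cosMu μ t * Z 0 + phiMu μ t * (deriv Z 0 + I * a / 2 * Z 0)) := by
  obtain ⟨hZ₁, hZ₂, hode⟩ := hZ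
  set c : ℂ := I * a / 2
  have hW : ∀ t : ℝ, HasDerivAt (fun t : ℝ => cexp (c * t) * Z t)
      (cexp (c * t) * (deriv Z t + c * Z t)) t :=
    fun t => hasDerivAt_cexp_mul_mul c (hZ₁ t).hasDerivAt
  have hW' : ∀ t : ℝ, HasDerivAt (fun t : ℝ => cexp (c * t) * (deriv Z t + c * Z t))
      (μ • (cexp (c * t) * Z t)) t := by
    intro t
    refine (hasDerivAt_cexp_mul_mul c ((hZ₂ t).hasDerivAt.add
      ((hZ₁ t).hasDerivAt.const_mul c))).congr_deriv ?_
    have hμ' : (μ : ℂ) = -a ^ 2 / 4 - κ := mod_cast hμ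
    simp only [Pi.add_apply, real_smul]
    linear_combination cexp (c * t) * hode t - cexp (c * t) * Z t * hμ'
      + cexp (c * t) * Z t * a ^ 2 / 4 * I_sq
  have h := eq_cosMu_smul_add_phiMu_smul_of_hasDerivAt hW hW' t
  simp only [real_smul, ofReal_zero, mul_zero, Complex.exp_zero, one_mul] at h
  rw [← h, ← mul_assoc, ← Complex.exp_add, neg_mul, neg_add_cancel, Complex.exp_zero, one_mul]

end Gauge

theorem stmt_12_general (a κ μ r : ℝ) (hμ : μ = -a ^ 2 / 4 - κ)
    (hφ : phiMu μ r ≠ 0) (z₀ : ℂ) :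
    ((∀ t : ℝ, DifferentiableAt ℝ (fun t : ℝ =>
        Complex.exp (Complex.I * (a : ℂ) * ((r : ℂ) - (t : ℂ)) / 2) *
          ((phiMu μ t : ℂ) / (phiMu μ r : ℂ)) * z₀) t)
      ∧ (∀ t : ℝ, DifferentiableAt ℝ (deriv (fun t : ℝ =>
          Complex.exp (Complex.I * (a : ℂ) * ((r : ℂ) - (t : ℂ)) / 2) *
            ((phiMu μ t : ℂ) / (phiMu μ r : ℂ)) * z₀)) t)
      ∧ (∀ t : ℝ,
          deriv (deriv (fun t : ℝ =>
            Complex.exp (Complex.I * (a : ℂ) * ((r : ℂ) - (t : ℂ)) / 2) *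
              ((phiMu μ t : ℂ) / (phiMu μ r : ℂ)) * z₀)) t
          + Complex.I * (a : ℂ) *
              deriv (fun t : ℝ =>
                Complex.exp (Complex.I * (a : ℂ) * ((r : ℂ) - (t : ℂ)) / 2) *
                  ((phiMu μ t : ℂ) / (phiMu μ r : ℂ)) * z₀) t
          + (κ : ℂ) *
              (Complex.exp (Complex.I * (a : ℂ) * ((r : ℂ) - (t : ℂ)) / 2) *
                ((phiMu μ t : ℂ) / (phiMu μ r : ℂ)) * z₀) = 0)
      ∧ Complex.exp (Complex.I * (a : ℂ) * ((r : ℂ) - ((0 : ℝ) : ℂ)) / 2) *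
          ((phiMu μ 0 : ℂ) / (phiMu μ r : ℂ)) * z₀ = 0
      ∧ Complex.exp (Complex.I * (a : ℂ) * ((r : ℂ) - (r : ℂ)) / 2) *
          ((phiMu μ r : ℂ) / (phiMu μ r : ℂ)) * z₀ = z₀)
    ∧ ∀ Z : ℝ → ℂ,
        (∀ t : ℝ, DifferentiableAt ℝ Z t) →
        (∀ t : ℝ, DifferentiableAt ℝ (deriv Z) t) →
        (∀ t : ℝ, deriv (deriv Z) t + Complex.I * (a : ℂ) * deriv Z t + (κ : ℂ) * Z t = 0) →
        Z 0 = 0 → Z r = z₀ →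
        Z = fun t : ℝ =>
          Complex.exp (Complex.I * (a : ℂ) * ((r : ℂ) - (t : ℂ)) / 2) *
            ((phiMu μ t : ℂ) / (phiMu μ r : ℂ)) * z₀ := by
  have hφC : (phiMu μ r : ℂ) ≠ 0 := mod_cast hφ
  have hexp : ∀ t : ℝ,
      cexp (I * a * (r - t) / 2) = cexp (-(I * a / 2) * t) * cexp (I * a / 2 * r) := fun t => by
    rw [← Complex.exp_add]; ring_nf
  have hZ₀ : (fun t : ℝ => cexp (I * a * (r - t) / 2) * (phiMu μ t / phiMu μ r) * z₀) =
      fun t : ℝ => cexp (-(I * a / 2) * t) *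
        (phiMu μ t * (cexp (I * a / 2 * r) * z₀ / phiMu μ r)) := by
    ext t
    rw [hexp]
    ring
  refine ⟨?_, fun Z hZ hZ' hode h0 hZr => ?_⟩
  · obtain ⟨hdiff, hdiff', hsol⟩ := hZ₀ ▸ isJacobiSolution_cexp_mul hμ
      (fun t => (hasDerivAt_phiMu μ t).ofReal_comp.mul_const _)
      (fun t => ((hasDerivAt_cosMu μ t).ofReal_comp.mul_const _).congr_deriv (by push_cast; ring))
    exact ⟨hdiff, hdiff', hsol, by simp, by simp [hφC]⟩
  · have hZt := IsJacobiSolution.eq_cexp_mul hμ ⟨hZ, hZ', hode⟩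
    subst hZr
    ext t
    rw [hZt t, hZt r, h0, hexp]
    simp only [mul_zero, zero_add, add_zero, neg_mul, Complex.exp_neg]
    field_simp

/-- Boundary-value form of Lemma 4.1(a): with `μ = -a²/4 - κ` and `φ_μ(r) ≠ 0`,
`Z(t) = e^{i a (r-t)/2} (φ_μ(t)/φ_μ(r)) z₀` is the unique twice differentiable solution
of `Z'' + i a Z' + κ Z = 0` with `Z(0) = 0` and `Z(r) = z₀`. -/
theorem stmt_12 (a κ μ r : ℝ) (hμ : μ = -a ^ 2 / 4 - κ) (hr : 0 < r)
    (hφ : phiMu μ r ≠ 0) (z₀ : ℂ) :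
    ((∀ t : ℝ, DifferentiableAt ℝ (fun t : ℝ =>
        Complex.exp (Complex.I * (a : ℂ) * ((r : ℂ) - (t : ℂ)) / 2) *
          ((phiMu μ t : ℂ) / (phiMu μ r : ℂ)) * z₀) t)
      ∧ (∀ t : ℝ, DifferentiableAt ℝ (deriv (fun t : ℝ =>
          Complex.exp (Complex.I * (a : ℂ) * ((r : ℂ) - (t : ℂ)) / 2) *
            ((phiMu μ t : ℂ) / (phiMu μ r : ℂ)) * z₀)) t)
      ∧ (∀ t : ℝ,
          deriv (deriv (fun t : ℝ =>
            Complex.exp (Complex.I * (a : ℂ) * ((r : ℂ) - (t : ℂ)) / 2) *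
              ((phiMu μ t : ℂ) / (phiMu μ r : ℂ)) * z₀)) t
          + Complex.I * (a : ℂ) *
              deriv (fun t : ℝ =>
                Complex.exp (Complex.I * (a : ℂ) * ((r : ℂ) - (t : ℂ)) / 2) *
                  ((phiMu μ t : ℂ) / (phiMu μ r : ℂ)) * z₀) t
          + (κ : ℂ) *
              (Complex.exp (Complex.I * (a : ℂ) * ((r : ℂ) - (t : ℂ)) / 2) *
                ((phiMu μ t : ℂ) / (phiMu μ r : ℂ)) * z₀) = 0)
      ∧ Complex.exp (Complex.I * (a : ℂ) * ((r : ℂ) - ((0 : ℝ) : ℂ)) / 2) *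
          ((phiMu μ 0 : ℂ) / (phiMu μ r : ℂ)) * z₀ = 0
      ∧ Complex.exp (Complex.I * (a : ℂ) * ((r : ℂ) - (r : ℂ)) / 2) *
          ((phiMu μ r : ℂ) / (phiMu μ r : ℂ)) * z₀ = z₀)
    ∧ ∀ Z : ℝ → ℂ,
        (∀ t : ℝ, DifferentiableAt ℝ Z t) →
        (∀ t : ℝ, DifferentiableAt ℝ (deriv Z) t) →
        (∀ t : ℝ, deriv (deriv Z) t + Complex.I * (a : ℂ) * deriv Z t + (κ : ℂ) * Z t = 0) →
        Z 0 = 0 → Z r = z₀ →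
        Z = fun t : ℝ =>
          Complex.exp (Complex.I * (a : ℂ) * ((r : ℂ) - (t : ℂ)) / 2) *
            ((phiMu μ t : ℂ) / (phiMu μ r : ℂ)) * z₀ :=
  stmt_12_general a κ μ r hμ hφ z₀
end

section
/- For every k > 0 and every r with 0 < √k·r < π/2, one has √k·( sin(√k·r) − √k·r·cos(√k·r) ) / ( 2 − 2·cos(√k·r) − √k·r·sin(√k·r) ) = (φ_{−k}'(r)/φ_{−k}(r)) · (Ψ_{−k}(r)/Ψ_{−k}(r/2)). -/
/-!
With `x = √k r`, the negative-curvature branches give `φ_{-k}(r) = sin x / √k` and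
`Ψ_{-k}(r) = (sin x - x cos x) / (k^{3/2} r cos x)`. By the double-angle formulas,
`(2 - 2 cos x - x sin x) cos (x/2) = 2 sin x (sin (x/2) - (x/2) cos (x/2))`, which is exactly what
relates the left-hand side to the quotient `Ψ_{-k}(r) / Ψ_{-k}(r/2)`.
-/

open Real

theorem phiMu_neg {k : ℝ} (hk : 0 < k) : phiMu (-k) = fun y => sin (√k * y) / √k := by
  funext y
  simp [phiMu, not_lt_of_gt hk, hk.ne']

theorem deriv_phiMu_neg {k : ℝ} (hk : 0 < k) (r : ℝ) : deriv (phiMu (-k)) r = cos (√k * r) := by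
  have hs : √k ≠ 0 := (sqrt_pos.mpr hk).ne'
  rw [phiMu_neg hk]
  have h := (((hasDerivAt_id r).const_mul √k).sin).div_const √k
  simp only [id, mul_one] at h
  rw [h.deriv, mul_div_cancel_right₀ _ hs]

theorem PsiMu_neg {k r : ℝ} (hk : 0 < k) (hr : r ≠ 0) (hc : cos (√k * r) ≠ 0) :
    PsiMu (-k) r = (sin (√k * r) - √k * r * cos (√k * r)) / (√k ^ 3 * r * cos (√k * r)) := by
  have hs : √k ≠ 0 := (sqrt_pos.mpr hk).ne'
  simp only [PsiMu, neg_pos, not_lt_of_gt hk, neg_eq_zero, hk.ne', if_false, neg_neg,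
    tan_eq_sin_div_cos]
  field_simp

theorem two_sub_two_mul_cos_sub_mul_sin_mul_cos_half (x : ℝ) :
    (2 - 2 * cos x - x * sin x) * cos (x / 2)
      = 2 * sin x * (sin (x / 2) - x / 2 * cos (x / 2)) := by
  obtain ⟨y, rfl⟩ : ∃ y, x = 2 * y := ⟨x / 2, by ring⟩
  rw [mul_div_cancel_left₀ y two_ne_zero, sin_two_mul, cos_two_mul]
  linear_combination (-4 * cos y) * sin_sq_add_cos_sq y

/-- Identity `F_Sas(r,k) = (φ_{-k}'(r)/φ_{-k}(r))·(Ψ_{-k}(r)/Ψ_{-k}(r/2))`,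
positively curved case, for `0 < √k r < π/2`. -/
theorem stmt_16 (k r : ℝ) (hk : 0 < k)
    (h1 : 0 < Real.sqrt k * r) (h2 : Real.sqrt k * r < Real.pi / 2) :
    Real.sqrt k * (Real.sin (Real.sqrt k * r) - Real.sqrt k * r * Real.cos (Real.sqrt k * r)) /
        (2 - 2 * Real.cos (Real.sqrt k * r) - Real.sqrt k * r * Real.sin (Real.sqrt k * r))
      = (deriv (phiMu (-k)) r / phiMu (-k) r) * (PsiMu (-k) r / PsiMu (-k) (r / 2)) := by
  have hs : 0 < √k := sqrt_pos.mpr hk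
  have hr : 0 < r := pos_of_mul_pos_right h1 hs.le
  have hcos : 0 < cos (√k * r) := cos_pos_of_mem_Ioo ⟨by linarith, h2⟩
  have hhalf : √k * (r / 2) = √k * r / 2 := mul_div_assoc' _ _ _
  have hcos_half : 0 < cos (√k * r / 2) := cos_pos_of_mem_Ioo ⟨by linarith, by linarith⟩
  rw [deriv_phiMu_neg hk, phiMu_neg hk, PsiMu_neg hk hr.ne' hcos.ne',
    PsiMu_neg hk (half_pos hr).ne' (hhalf ▸ hcos_half.ne'), hhalf]
  beta_reduce
  generalize √k * r = x at *
  rw [eq_div_of_mul_eq hcos_half.ne' (two_sub_two_mul_cos_sub_mul_sin_mul_cos_half x)]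
  field_simp
end
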